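/- Fix m, n, d ≥ 1, scales ν, ε > 0, an activation σ : ℝ → ℝ that is twice continuously differentiable with σ(0) = 0, σ'(0) = 1, |σ'| ≤ 1 and |σ''| ≤ 1 on ℝ, and data (x_i, y_i)_{i=1}^n with ‖x_i‖₂ ≤ 1 and |y_i| ≤ 1. For parameters θ = (a_k, w_k)_{k=1}^m define for each k ∈ [m]: f_k = (1/n) Σ_{i=1}^n ( e_i(θ)·σ(ε⟨w_k, x_i⟩)/ε + y_i·⟨w_k, x_i⟩ ), g_k = (1/n) Σ_{i=1}^n ( e_i(θ)·a_k·σ'(ε⟨w_k, x_i⟩) + y_i·a_k )·x_i, p_k = max(|a_k|, ‖w_k‖_∞), and p_max = max_{k ∈ [m]} p_k. Then for every k ∈ [m]: |f_k| ≤ d·m·ν·ε·p_max²·‖w_k‖_∞ + ε·d·‖w_k‖_∞², and ‖g_k‖_∞ ≤ √d·m·ν·ε·p_max²·|a_k| + ε·√d·‖w_k‖_∞·|a_k|. -/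

import Mathlib

/-!
Since `σ(0) = 0`, `σ'(0) = 1` and `|σ'|, |σ''| ≤ 1`, we have `|σ u| ≤ |u|`, `|σ' u - 1| ≤ |u|` and
`|σ u - u| ≤ u²`. Substituting `e_i = f_θ(x_i) - y_i`, the label terms cancel to leading order:
`e_i σ(εs)/ε + y_i s = f_θ(x_i) σ(εs)/ε - y_i (σ(εs) - εs)/ε` and
`e_i a σ'(εs) + y_i a = a (f_θ(x_i) σ'(εs) - y_i (σ'(εs) - 1))`, with `s = ⟨w_k, x_i⟩`.
Each remaining factor is small: `|s| ≤ √d ‖w_k‖_∞` by Cauchy–Schwarz, hence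
`|f_θ(x_i)| ≤ m ν ε √d p_max²`. Averaging over the samples preserves the bounds.
-/

open Finset

section Activation

variable {σ : ℝ → ℝ}

theorem abs_sub_le_abs_sub_of_abs_deriv_le_one (hσ : Differentiable ℝ σ)
    (hσ' : ∀ u, |deriv σ u| ≤ 1) (u v : ℝ) : |σ u - σ v| ≤ |u - v| := by
  simpa [Real.norm_eq_abs] using convex_univ.norm_image_sub_le_of_norm_deriv_le
    (fun t _ => hσ t) (fun t _ => hσ' t) (Set.mem_univ v) (Set.mem_univ u)

theorem abs_le_sq_of_abs_deriv_le_abs (hσ : Differentiable ℝ σ) (hσ0 : σ 0 = 0)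
    (hσ' : ∀ t, |deriv σ t| ≤ |t|) (u : ℝ) : |σ u| ≤ u ^ 2 := by
  have hderiv : ∀ t ∈ Set.uIcc 0 u, ‖deriv σ t‖ ≤ |u| := fun t ht => by
    simpa using (hσ' t).trans (by simpa using Set.abs_sub_left_of_mem_uIcc ht)
  have := (convex_uIcc 0 u).norm_image_sub_le_of_norm_deriv_le (fun t _ => hσ t) hderiv
    Set.left_mem_uIcc Set.right_mem_uIcc
  simpa [hσ0, ← sq] using this

theorem abs_le_abs_of_abs_deriv_le_one (hσ : Differentiable ℝ σ) (hσ0 : σ 0 = 0)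
    (hσ' : ∀ u, |deriv σ u| ≤ 1) (u : ℝ) : |σ u| ≤ |u| := by
  simpa [hσ0] using abs_sub_le_abs_sub_of_abs_deriv_le_one hσ hσ' u 0

theorem abs_deriv_sub_one_le_abs (hσ : ContDiff ℝ 2 σ) (hσ1 : deriv σ 0 = 1)
    (hσ'' : ∀ u, |deriv (deriv σ) u| ≤ 1) (u : ℝ) : |deriv σ u - 1| ≤ |u| := by
  have hσ' : Differentiable ℝ (deriv σ) :=
    (contDiff_succ_iff_deriv.mp (hσ : ContDiff ℝ (1 + 1) σ)).2.2.differentiable one_ne_zero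
  simpa [hσ1] using abs_sub_le_abs_sub_of_abs_deriv_le_one hσ' hσ'' u 0

theorem abs_sub_self_le_sq (hσ : ContDiff ℝ 2 σ) (hσ0 : σ 0 = 0) (hσ1 : deriv σ 0 = 1)
    (hσ'' : ∀ u, |deriv (deriv σ) u| ≤ 1) (u : ℝ) : |σ u - u| ≤ u ^ 2 := by
  have hdiff : Differentiable ℝ σ := hσ.differentiable two_ne_zero
  refine abs_le_sq_of_abs_deriv_le_abs (hdiff.sub differentiable_id) (by simp [hσ0])
    (fun t => ?_) u
  rw [deriv_sub (hdiff t) differentiableAt_id, deriv_id]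
  exact abs_deriv_sub_one_le_abs hσ hσ1 hσ'' t

end Activation

section Coordinates

variable {ι : Type*} [Fintype ι] {x : ι → ℝ}

theorem abs_le_one_of_sqrt_sum_sq_le_one (hx : √(∑ t, x t ^ 2) ≤ 1) (j : ι) : |x j| ≤ 1 :=
  (Real.abs_le_sqrt (single_le_sum (fun t _ => sq_nonneg (x t)) (mem_univ j))).trans hx

theorem sum_abs_le_sqrt_card_of_sqrt_sum_sq_le_one (hx : √(∑ t, x t ^ 2) ≤ 1) :
    ∑ t, |x t| ≤ √(Fintype.card ι) := by
  have hsq : ∑ t, x t ^ 2 ≤ 1 := by simpa using (Real.sqrt_le_left zero_le_one).mp hx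
  rw [Real.le_sqrt (sum_nonneg fun t _ => abs_nonneg (x t)) (Nat.cast_nonneg _)]
  calc (∑ t, |x t|) ^ 2 ≤ Fintype.card ι * ∑ t, |x t| ^ 2 := sq_sum_le_card_mul_sum_sq
    _ ≤ Fintype.card ι := by simpa using mul_le_mul_of_nonneg_left hsq (Nat.cast_nonneg _)

theorem abs_sum_mul_le_sqrt_card_mul_iSup (w : ι → ℝ) (hx : √(∑ t, x t ^ 2) ≤ 1) :
    |∑ t, w t * x t| ≤ √(Fintype.card ι) * ⨆ t, |w t| := by
  have hw : ∀ t, |w t| ≤ ⨆ t, |w t| := le_ciSup (Finite.bddAbove_range _)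
  calc |∑ t, w t * x t| ≤ ∑ t, |w t| * |x t| := by
        simpa only [abs_mul] using abs_sum_le_sum_abs (fun t => w t * x t) univ
    _ ≤ ∑ t, (⨆ t, |w t|) * |x t| := by gcongr with t; exact hw t
    _ ≤ (⨆ t, |w t|) * √(Fintype.card ι) := by
        rw [← mul_sum]
        exact mul_le_mul_of_nonneg_left (sum_abs_le_sqrt_card_of_sqrt_sum_sq_le_one hx)
          (Real.iSup_nonneg fun t => abs_nonneg (w t))
    _ = √(Fintype.card ι) * ⨆ t, |w t| := mul_comm _ _

end Coordinates

theorem abs_one_div_mul_sum_le {n : ℕ} {F : Fin n → ℝ} {B : ℝ} (hF : ∀ i, |F i| ≤ B)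
    (hB : 0 ≤ B) : |1 / (n : ℝ) * ∑ i, F i| ≤ B := by
  rcases n.eq_zero_or_pos with rfl | hn
  · simpa using hB
  rw [abs_mul, abs_of_pos (by positivity), one_div_mul_eq_div, div_le_iff₀ (by positivity)]
  calc |∑ i, F i| ≤ ∑ i, |F i| := abs_sum_le_sum_abs _ _
    _ ≤ ∑ _i : Fin n, B := sum_le_sum fun i _ => hF i
    _ = B * n := by simp [mul_comm]

theorem abs_sum_mul_mul_activation_le {ι : Type*} [Fintype ι] {σ : ℝ → ℝ}
    (hσ : ∀ u, |σ u| ≤ |u|) {ν ε A S : ℝ} (hν : 0 ≤ ν) (hε : 0 ≤ ε) {a s : ι → ℝ}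
    (ha : ∀ l, |a l| ≤ A) (hs : ∀ l, |s l| ≤ S) :
    |∑ l, ν * a l * σ (ε * s l)| ≤ Fintype.card ι * (ν * A * (ε * S)) := by
  have hterm : ∀ l, |ν * a l * σ (ε * s l)| ≤ ν * A * (ε * S) := fun l => by
    have hσl : |σ (ε * s l)| ≤ ε * S :=
      (hσ _).trans (by rw [abs_mul, abs_of_nonneg hε]; gcongr; exact hs l)
    rw [abs_mul, abs_mul, abs_of_nonneg hν, mul_assoc, mul_assoc]
    exact mul_le_mul_of_nonneg_left (mul_le_mul (ha l) hσl (abs_nonneg _)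
      ((abs_nonneg _).trans (ha l))) hν
  calc |∑ l, ν * a l * σ (ε * s l)| ≤ ∑ l, |ν * a l * σ (ε * s l)| := abs_sum_le_sum_abs _ _
    _ ≤ ∑ _l : ι, ν * A * (ε * S) := sum_le_sum fun l _ => hterm l
    _ = Fintype.card ι * (ν * A * (ε * S)) := by simp

section Sample

variable {σ : ℝ → ℝ} {N y s B S ε : ℝ}

theorem abs_sub_mul_activation_div_add_mul_le (hσ : ∀ u, |σ u| ≤ |u|)
    (hσq : ∀ u, |σ u - u| ≤ u ^ 2) (hε : 0 < ε) (hN : |N| ≤ B) (hy : |y| ≤ 1) (hs : |s| ≤ S) :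
    |(N - y) * σ (ε * s) / ε + y * s| ≤ B * S + ε * S ^ 2 := by
  have hεs : |ε * s| ≤ ε * S := by rw [abs_mul, abs_of_pos hε]; gcongr
  have hσs : |σ (ε * s) - ε * s| ≤ (ε * S) ^ 2 :=
    (hσq _).trans (by rw [← sq_abs]; gcongr)
  have hsplit : (N - y) * σ (ε * s) / ε + y * s
      = (N * σ (ε * s) - y * (σ (ε * s) - ε * s)) / ε := by
    field_simp
    ring
  rw [hsplit, abs_div, abs_of_pos hε, div_le_iff₀ hε]
  calc |N * σ (ε * s) - y * (σ (ε * s) - ε * s)|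
      ≤ |N| * |σ (ε * s)| + |y| * |σ (ε * s) - ε * s| := by
        rw [← abs_mul, ← abs_mul]; exact abs_sub _ _
    _ ≤ B * (ε * S) + 1 * (ε * S) ^ 2 := by
        gcongr
        · exact (abs_nonneg _).trans hN
        · exact (hσ _).trans hεs
    _ = (B * S + ε * S ^ 2) * ε := by ring

theorem abs_sub_mul_mul_add_mul_mul_le {τ : ℝ → ℝ} {α ξ : ℝ} (hτ : ∀ u, |τ u| ≤ 1)
    (hτ1 : ∀ u, |τ u - 1| ≤ |u|) (hε : 0 ≤ ε) (hN : |N| ≤ B) (hy : |y| ≤ 1) (hs : |s| ≤ S)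
    (hξ : |ξ| ≤ 1) :
    |((N - y) * α * τ (ε * s) + y * α) * ξ| ≤ |α| * (B + ε * S) := by
  have hsplit : ((N - y) * α * τ (ε * s) + y * α) * ξ
      = α * (N * τ (ε * s) - y * (τ (ε * s) - 1)) * ξ := by ring
  rw [hsplit, abs_mul, abs_mul]
  calc |α| * |N * τ (ε * s) - y * (τ (ε * s) - 1)| * |ξ|
      ≤ |α| * (|N| * |τ (ε * s)| + |y| * |τ (ε * s) - 1|) * 1 := by
        gcongr
        exact (abs_sub _ _).trans_eq (by rw [abs_mul, abs_mul])
    _ ≤ |α| * (B * 1 + 1 * (ε * S)) * 1 := by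
        gcongr
        · exact (abs_nonneg _).trans hN
        · exact hτ _
        · exact (hτ1 _).trans (by rw [abs_mul, abs_of_nonneg hε]; gcongr)
    _ = |α| * (B + ε * S) := by ring

end Sample

theorem stmt_18_general (m n d : ℕ)
    (ν ε : ℝ) (hν : 0 < ν) (hε : 0 < ε)
    (σ : ℝ → ℝ) (hσ : ContDiff ℝ 2 σ) (hσ0 : σ 0 = 0) (hσ1 : deriv σ 0 = 1)
    (hσ' : ∀ u : ℝ, |deriv σ u| ≤ 1) (hσ'' : ∀ u : ℝ, |deriv (deriv σ) u| ≤ 1)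
    (x : Fin n → Fin d → ℝ) (y : Fin n → ℝ)
    (hx : ∀ i, Real.sqrt (∑ t, (x i t) ^ 2) ≤ 1) (hy : ∀ i, |y i| ≤ 1)
    (a : Fin m → ℝ) (w : Fin m → Fin d → ℝ)
    (e : Fin n → ℝ)
    (he : ∀ i, e i = (∑ k, ν * a k * σ (ε * ∑ t, w k t * x i t)) - y i)
    (f : Fin m → ℝ)
    (hf : ∀ k, f k = (1 / (n : ℝ)) *
      ∑ i, (e i * σ (ε * ∑ t, w k t * x i t) / ε + y i * ∑ t, w k t * x i t))
    (g : Fin m → Fin d → ℝ)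
    (hg : ∀ k j, g k j = (1 / (n : ℝ)) *
      ∑ i, (e i * a k * deriv σ (ε * ∑ t, w k t * x i t) + y i * a k) * x i j)
    (winf : Fin m → ℝ) (hwinf : ∀ k, winf k = ⨆ j, |w k j|)
    (p : Fin m → ℝ) (hp : ∀ k, p k = max |a k| (winf k))
    (pmax : ℝ) (hpmax : pmax = ⨆ k, p k) :
    ∀ k,
      |f k| ≤ d * m * ν * ε * pmax ^ 2 * winf k + ε * d * (winf k) ^ 2
      ∧ (⨆ j, |g k j|) ≤ Real.sqrt d * m * ν * ε * pmax ^ 2 * |a k|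
          + ε * Real.sqrt d * winf k * |a k| := by
  have hσabs := abs_le_abs_of_abs_deriv_le_one (hσ.differentiable two_ne_zero) hσ0 hσ'
  have hp_le : ∀ l, p l ≤ pmax := fun l => hpmax ▸ le_ciSup (Finite.bddAbove_range p) l
  have ha : ∀ l, |a l| ≤ pmax := fun l => (le_max_left _ _).trans (hp l ▸ hp_le l)
  have hwp : ∀ l, winf l ≤ pmax := fun l => (le_max_right _ _).trans (hp l ▸ hp_le l)
  have hp0 : 0 ≤ pmax :=
    hpmax ▸ Real.iSup_nonneg fun l => (abs_nonneg _).trans (hp l ▸ le_max_left _ _)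
  have hs : ∀ l i, |∑ t, w l t * x i t| ≤ √d * winf l := fun l i => by
    simpa [hwinf] using abs_sum_mul_le_sqrt_card_mul_iSup (w l) (hx i)
  have hN : ∀ i,
      |∑ l, ν * a l * σ (ε * ∑ t, w l t * x i t)| ≤ m * (ν * pmax * (ε * (√d * pmax))) :=
    fun i => by
      simpa using abs_sum_mul_mul_activation_le hσabs hν.le hε.le ha
        fun l => (hs l i).trans (mul_le_mul_of_nonneg_left (hwp l) (Real.sqrt_nonneg _))
  have hdd : √d * √d = d := Real.mul_self_sqrt d.cast_nonneg
  intro k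
  have hwk : 0 ≤ winf k := hwinf k ▸ Real.iSup_nonneg fun _ => abs_nonneg _
  constructor
  · rw [hf k]
    refine abs_one_div_mul_sum_le (fun i => ?_) (by positivity)
    rw [he i]
    calc _ ≤ m * (ν * pmax * (ε * (√d * pmax))) * (√d * winf k) + ε * (√d * winf k) ^ 2 :=
          abs_sub_mul_activation_div_add_mul_le hσabs (abs_sub_self_le_sq hσ hσ0 hσ1 hσ'') hε
            (hN i) (hy i) (hs k i)
      _ = _ := by linear_combination (m * ν * ε * pmax ^ 2 * winf k + ε * winf k ^ 2) * hdd
  · refine Real.iSup_le (fun j => ?_) (by positivity)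
    rw [hg k j]
    refine abs_one_div_mul_sum_le (fun i => ?_) (by positivity)
    rw [he i]
    calc _ ≤ |a k| * (m * (ν * pmax * (ε * (√d * pmax))) + ε * (√d * winf k)) :=
          abs_sub_mul_mul_add_mul_mul_le hσ' (abs_deriv_sub_one_le_abs hσ hσ1 hσ'') hε.le
            (hN i) (hy i) (hs k i) (abs_le_one_of_sqrt_sum_sq_le_one (hx i) j)
      _ = _ := by ring

/-- Estimates on the difference between the real and the linear dynamics (∞-energy,
a-lag regime): with `p_k = max(|a_k|, ‖w_k‖_∞)` and `p_max = max_k p_k`, one has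
`|f_k| ≤ d m ν ε p_max² ‖w_k‖_∞ + ε d ‖w_k‖_∞²` and
`‖g_k‖_∞ ≤ √d m ν ε p_max² |a_k| + ε √d ‖w_k‖_∞ |a_k|`. -/
theorem stmt_18 (m n d : ℕ) (hm : 1 ≤ m) (hn : 1 ≤ n) (hd : 1 ≤ d)
    (ν ε : ℝ) (hν : 0 < ν) (hε : 0 < ε)
    (σ : ℝ → ℝ) (hσ : ContDiff ℝ 2 σ) (hσ0 : σ 0 = 0) (hσ1 : deriv σ 0 = 1)
    (hσ' : ∀ u : ℝ, |deriv σ u| ≤ 1) (hσ'' : ∀ u : ℝ, |deriv (deriv σ) u| ≤ 1)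
    (x : Fin n → Fin d → ℝ) (y : Fin n → ℝ)
    (hx : ∀ i, Real.sqrt (∑ t, (x i t) ^ 2) ≤ 1) (hy : ∀ i, |y i| ≤ 1)
    (a : Fin m → ℝ) (w : Fin m → Fin d → ℝ)
    (e : Fin n → ℝ)
    (he : ∀ i, e i = (∑ k, ν * a k * σ (ε * ∑ t, w k t * x i t)) - y i)
    (f : Fin m → ℝ)
    (hf : ∀ k, f k = (1 / (n : ℝ)) *
      ∑ i, (e i * σ (ε * ∑ t, w k t * x i t) / ε + y i * ∑ t, w k t * x i t))
    (g : Fin m → Fin d → ℝ)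
    (hg : ∀ k j, g k j = (1 / (n : ℝ)) *
      ∑ i, (e i * a k * deriv σ (ε * ∑ t, w k t * x i t) + y i * a k) * x i j)
    (winf : Fin m → ℝ) (hwinf : ∀ k, winf k = ⨆ j, |w k j|)
    (p : Fin m → ℝ) (hp : ∀ k, p k = max |a k| (winf k))
    (pmax : ℝ) (hpmax : pmax = ⨆ k, p k) :
    ∀ k,
      |f k| ≤ d * m * ν * ε * pmax ^ 2 * winf k + ε * d * (winf k) ^ 2
      ∧ (⨆ j, |g k j|) ≤ Real.sqrt d * m * ν * ε * pmax ^ 2 * |a k|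
          + ε * Real.sqrt d * winf k * |a k| :=
  stmt_18_general m n d ν ε hν hε σ hσ hσ0 hσ1 hσ' hσ'' x y hx hy a w e he f hf g hg winf hwinf p hp
    pmax hpmax
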